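/- Let A be an m × n real matrix with m ≤ n having full row rank, set Ã = A/√λ_max(AAᵀ) and κ(A) = λ_min(AAᵀ)/λ_max(AAᵀ). Let g₀, g₁ ∈ ℝ^m satisfy g₀ᵀ(ÃÃᵀ)g₁ = 0. Then g₀ᵀg₁ ≤ (1 − κ(A))·‖g₀‖·‖g₁‖, and moreover 0 ≤ 1 − κ(A) < 1. -/

import Mathlib

/-!
Write `M = AAᵀ`; full row rank makes its eigenvalues positive, so they lie in
`[λ_min, λ_max] ⊂ (0, ∞)`. The hypothesis says `⟪g₀, M g₁⟫ = 0`, hence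
`⟪g₀, g₁⟫ = ⟪g₀, (I - M/λ_max) g₁⟫`. In an orthonormal eigenbasis of `M` the operator
`I - M/λ_max` is diagonal with entries `1 - λᵢ/λ_max ∈ [0, 1 - κ]`, so its norm is at most
`1 - κ`, and Cauchy–Schwarz finishes.
-/

open scoped RealInnerProductSpace Matrix

/-- The largest eigenvalue of a Hermitian real matrix. -/
noncomputable def lamMax {m : ℕ} {M : Matrix (Fin m) (Fin m) ℝ} (hM : M.IsHermitian) : ℝ :=
  ⨆ i, hM.eigenvalues i

/-- The smallest eigenvalue of a Hermitian real matrix. -/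
noncomputable def lamMin {m : ℕ} {M : Matrix (Fin m) (Fin m) ℝ} (hM : M.IsHermitian) : ℝ :=
  ⨅ i, hM.eigenvalues i

namespace OrthonormalBasis

variable {ι E : Type*} [Fintype ι] [NormedAddCommGroup E] [InnerProductSpace ℝ E]
  (b : OrthonormalBasis ι ℝ E) {T : E →ₗ[ℝ] E} {μ : ι → ℝ}

theorem repr_apply_of_apply_eq_smul (hT : ∀ i, T (b i) = μ i • b i) (v : E) (i : ι) :
    b.repr (T v) i = μ i * b.repr v i := by
  classical
  conv_lhs => rw [← b.sum_repr v]
  simp [hT, smul_smul, b.repr_self, Pi.single_apply, mul_comm]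

theorem norm_apply_le_of_apply_eq_smul (hT : ∀ i, T (b i) = μ i • b i) {c : ℝ} (hc : 0 ≤ c)
    (hμ : ∀ i, |μ i| ≤ c) (v : E) : ‖T v‖ ≤ c * ‖v‖ := by
  refine le_of_pow_le_pow_left₀ two_ne_zero (by positivity) ?_
  rw [mul_pow, ← b.repr.norm_map, ← b.repr.norm_map v, EuclideanSpace.norm_sq_eq,
    EuclideanSpace.norm_sq_eq, Finset.mul_sum]
  gcongr with i
  rw [b.repr_apply_of_apply_eq_smul hT, norm_mul, mul_pow, Real.norm_eq_abs]
  gcongr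
  exact hμ i

end OrthonormalBasis

namespace Matrix

open scoped ComplexOrder in
theorem eigenvalues_self_mul_conjTranspose_pos {m n 𝕜 : Type*} [Fintype m] [Fintype n]
    [DecidableEq m] [RCLike 𝕜] (A : Matrix m n 𝕜) (hA : A.rank = Fintype.card m) (i : m) :
    0 < (isHermitian_mul_conjTranspose_self A).eigenvalues i := by
  refine (eigenvalues_self_mul_conjTranspose_nonneg A i).lt_of_ne' fun hi => ?_
  have hcard := (isHermitian_mul_conjTranspose_self A).rank_eq_card_non_zero_eigs
  rw [rank_self_mul_conjTranspose, hA] at hcard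
  exact (Fintype.card_subtype_lt (p := fun j => _ ≠ 0) (not_not.2 hi)).ne' hcard

theorem IsHermitian.toEuclideanLin_eigenvectorBasis {n 𝕜 : Type*} [Fintype n] [DecidableEq n]
    [RCLike 𝕜] {M : Matrix n n 𝕜} (hM : M.IsHermitian) (j : n) :
    toEuclideanLin M (hM.eigenvectorBasis j) = hM.eigenvalues j • hM.eigenvectorBasis j := by
  ext i
  simpa using congrFun (hM.mulVec_eigenvectorBasis j) i

theorem inv_sqrt_smul_mul_conjTranspose_smul {m n : Type*} [Fintype n] (A : Matrix m n ℝ)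
    {L : ℝ} (hL : 0 ≤ L) : ((√L)⁻¹ • A) * ((√L)⁻¹ • A)ᴴ = L⁻¹ • (A * Aᴴ) := by
  rw [conjTranspose_smul, star_trivial, Matrix.smul_mul, Matrix.mul_smul, smul_smul, ← mul_inv,
    Real.mul_self_sqrt hL]

end Matrix

section ExtremeEigenvalues

variable {m : ℕ} {M : Matrix (Fin m) (Fin m) ℝ} (hM : M.IsHermitian)

theorem eigenvalues_le_lamMax (i : Fin m) : hM.eigenvalues i ≤ lamMax hM :=
  le_ciSup (Set.finite_range _).bddAbove i

theorem lamMin_le_eigenvalues (i : Fin m) : lamMin hM ≤ hM.eigenvalues i :=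
  ciInf_le (Set.finite_range _).bddBelow i

theorem lamMax_pos [NeZero m] (hpos : ∀ i, 0 < hM.eigenvalues i) : 0 < lamMax hM :=
  (hpos 0).trans_le (eigenvalues_le_lamMax hM 0)

theorem lamMin_div_lamMax_mem_Ioc [NeZero m] (hpos : ∀ i, 0 < hM.eigenvalues i) :
    lamMin hM / lamMax hM ∈ Set.Ioc 0 1 := by
  obtain ⟨i, hi⟩ : ∃ i, hM.eigenvalues i = lamMin hM := exists_eq_ciInf_of_finite
  have hL := lamMax_pos hM hpos
  rw [← hi]
  exact ⟨div_pos (hpos i) hL, div_le_one_of_le₀ (eigenvalues_le_lamMax hM i) hL.le⟩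

theorem abs_one_sub_eigenvalues_div_lamMax_le {i : Fin m} (hi : 0 < hM.eigenvalues i) :
    |1 - hM.eigenvalues i / lamMax hM| ≤ 1 - lamMin hM / lamMax hM := by
  have hle := eigenvalues_le_lamMax hM i
  have hge := lamMin_le_eigenvalues hM i
  have hL : 0 < lamMax hM := hi.trans_le hle
  have hratio : hM.eigenvalues i / lamMax hM ≤ 1 := div_le_one_of_le₀ hle hL.le
  have hℓL : lamMin hM / lamMax hM ≤ hM.eigenvalues i / lamMax hM := by gcongr
  exact abs_le.2 ⟨by linarith, by linarith⟩

end ExtremeEigenvalues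

/-- Over `ℝ`, the conjugate transpose `Aᴴ` coincides with the transpose `Aᵀ`. -/
theorem relaxed_orthogonality_of_normalized_matrix_general
    {m n : ℕ} (hm : 0 < m)
    (A : Matrix (Fin m) (Fin n) ℝ) (hrank : A.rank = m)
    (At : Matrix (Fin m) (Fin n) ℝ)
    (hAt : At = (Real.sqrt (lamMax (Matrix.isHermitian_mul_conjTranspose_self A)))⁻¹ • A)
    (κA : ℝ) (hκA : κA = lamMin (Matrix.isHermitian_mul_conjTranspose_self A) /
      lamMax (Matrix.isHermitian_mul_conjTranspose_self A))
    (g0 g1 : EuclideanSpace ℝ (Fin m))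
    (horth : ⟪g0, Matrix.toEuclideanLin (At * Atᴴ) g1⟫ = 0) :
    ⟪g0, g1⟫ ≤ (1 - κA) * ‖g0‖ * ‖g1‖ ∧ 0 ≤ 1 - κA ∧ 1 - κA < 1 := by
  have : NeZero m := ⟨hm.ne'⟩
  set hM := Matrix.isHermitian_mul_conjTranspose_self A
  set L := lamMax hM
  have hpos : ∀ i, 0 < hM.eigenvalues i :=
    A.eigenvalues_self_mul_conjTranspose_pos (by rw [hrank, Fintype.card_fin])
  have hL : 0 < L := lamMax_pos hM hpos
  have hκ : κA ∈ Set.Ioc 0 1 := hκA ▸ lamMin_div_lamMax_mem_Ioc hM hpos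
  refine ⟨?_, by linarith [hκ.2], by linarith [hκ.1]⟩
  rw [hAt, Matrix.inv_sqrt_smul_mul_conjTranspose_smul A hL.le] at horth
  set T := LinearMap.id - L⁻¹ • Matrix.toEuclideanLin (A * Aᴴ)
  have hT : ∀ i, T (hM.eigenvectorBasis i) =
      (1 - hM.eigenvalues i / L) • hM.eigenvectorBasis i := fun i => by
    simp only [T, LinearMap.sub_apply, LinearMap.id_apply, LinearMap.smul_apply,
      hM.toEuclideanLin_eigenvectorBasis, smul_smul, sub_smul, one_smul, div_eq_inv_mul]
  calc ⟪g0, g1⟫ = ⟪g0, T g1⟫ := by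
        simp only [T, LinearMap.sub_apply, LinearMap.id_apply, LinearMap.smul_apply,
          inner_sub_right, inner_smul_right, map_smul] at horth ⊢
        rw [horth, sub_zero]
    _ ≤ ‖g0‖ * ‖T g1‖ := real_inner_le_norm _ _
    _ ≤ ‖g0‖ * ((1 - κA) * ‖g1‖) := by
      gcongr
      exact hM.eigenvectorBasis.norm_apply_le_of_apply_eq_smul hT (sub_nonneg.2 hκ.2)
        (fun i => hκA ▸ abs_one_sub_eigenvalues_div_lamMax_le hM (hpos i)) g1
    _ = (1 - κA) * ‖g0‖ * ‖g1‖ := by ring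

/-- **Relaxed orthogonality.** For `A` an `m × n` matrix (`m ≤ n`) of full row rank,
`Ã = A/√λ_max(AAᵀ)` and `κ(A) = λ_min(AAᵀ)/λ_max(AAᵀ)`, if `g₀ᵀ(ÃÃᵀ)g₁ = 0` then
`g₀ᵀg₁ ≤ (1 − κ(A))‖g₀‖‖g₁‖`, and `0 ≤ 1 − κ(A) < 1`.
(Over `ℝ`, the conjugate transpose `Aᴴ` coincides with the transpose `Aᵀ`.) -/
theorem relaxed_orthogonality_of_normalized_matrix
    {m n : ℕ} (hm : 0 < m) (hmn : m ≤ n)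
    (A : Matrix (Fin m) (Fin n) ℝ) (hrank : A.rank = m)
    (At : Matrix (Fin m) (Fin n) ℝ)
    (hAt : At = (Real.sqrt (lamMax (Matrix.isHermitian_mul_conjTranspose_self A)))⁻¹ • A)
    (κA : ℝ) (hκA : κA = lamMin (Matrix.isHermitian_mul_conjTranspose_self A) /
      lamMax (Matrix.isHermitian_mul_conjTranspose_self A))
    (g0 g1 : EuclideanSpace ℝ (Fin m))
    (horth : ⟪g0, Matrix.toEuclideanLin (At * Atᴴ) g1⟫ = 0) :
    ⟪g0, g1⟫ ≤ (1 - κA) * ‖g0‖ * ‖g1‖ ∧ 0 ≤ 1 - κA ∧ 1 - κA < 1 :=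
  relaxed_orthogonality_of_normalized_matrix_general hm A hrank At hAt κA hκA g0 g1 horth
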